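/- Assume the formal mapping H = (F,G) sends M into M'. If Jac H ≢ 0, then det(∂/∂z (F(z,Q(z,χ,τ)))) ≢ 0, where F(z,Q(z,χ,τ)) is the ℂ^n-valued formal power series in (z,χ,τ) obtained by substitution and the determinant is that of its n×n Jacobian matrix with respect to z. -/

import Mathlib

open MvPowerSeries

noncomputable section

namespace Paper

variable {σ τ : Type*}

/-- Total degree `|α|` of a multi-index. -/
def msize (α : σ →₀ ℕ) : ℕ := α.sum fun _ k => k

/-- Multi-index factorial `α!`. -/
def mfact (β : σ →₀ ℕ) : ℕ := β.prod fun _ k => k.factorial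

/-- A formal power series is convergent if its coefficients satisfy a Cauchy-type estimate
`‖f_α‖ ≤ C r^{-|α|}`. -/
def IsConv (f : MvPowerSeries σ ℂ) : Prop :=
  ∃ C r : ℝ, 0 < C ∧ 0 < r ∧
    ∀ α : σ →₀ ℕ, ‖MvPowerSeries.coeff α f‖ ≤ C * r⁻¹ ^ msize α

/-- Coefficientwise complex conjugation `f̄`. -/
def sconj (f : MvPowerSeries σ ℂ) : MvPowerSeries σ ℂ :=
  fun α => starRingEnd ℂ (MvPowerSeries.coeff α f)

/-- Iterated partial derivative `∂^β f`. -/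
def dpow (β : σ →₀ ℕ) (f : MvPowerSeries σ ℂ) : MvPowerSeries σ ℂ :=
  fun α => (((β.prod fun i k => (α i + k).choose k * k.factorial) : ℕ) : ℂ) *
    MvPowerSeries.coeff (α + β) f

/-- First-order partial derivative in the direction `i`. -/
def pd (i : σ) (f : MvPowerSeries σ ℂ) : MvPowerSeries σ ℂ :=
  dpow (Finsupp.single i 1) f

/-- Apply `∂^β`, then keep only the variables in the range of `e` (an injection),
setting all the others equal to `0`. -/
def dAt0 (e : σ → τ) (β : τ →₀ ℕ) (f : MvPowerSeries τ ℂ) : MvPowerSeries σ ℂ :=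
  fun γ => MvPowerSeries.coeff (Finsupp.mapDomain e γ) (dpow β f)

/-- Substitution of the power series `a s` (all assumed to have vanishing constant term)
for the variables of `f`. -/
def substC [Fintype σ] [DecidableEq σ] (a : σ → MvPowerSeries τ ℂ) (f : MvPowerSeries σ ℂ) :
    MvPowerSeries τ ℂ :=
  fun γ => ∑ α ∈ Finset.Iic (Finsupp.equivFunOnFinite.symm fun _ : σ => msize γ),
    MvPowerSeries.coeff α f * MvPowerSeries.coeff γ (∏ s, (a s) ^ (α s))

/-- Renaming of variables along an injection `e`. -/
def inject [Fintype σ] [DecidableEq σ] (e : σ → τ) (f : MvPowerSeries σ ℂ) :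
    MvPowerSeries τ ℂ :=
  substC (fun s => MvPowerSeries.X (e s)) f

/-- The Jacobian determinant of a formal self-mapping. -/
def jacDet {ι : Type*} [Fintype ι] [DecidableEq ι] (h : ι → MvPowerSeries ι ℂ) :
    MvPowerSeries ι ℂ :=
  (Matrix.of fun k l => pd l (h k)).det

/-- The sum of a (convergent) power series at a point. -/
def evalAt [Fintype σ] (f : MvPowerSeries σ ℂ) (x : σ → ℂ) : ℂ :=
  ∑' α : σ →₀ ℕ, MvPowerSeries.coeff α f * ∏ i, x i ^ α i

/-- The variables `(z, χ, τ) ∈ ℂ^n × ℂ^n × ℂ^d`. -/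
abbrev W3 (n d : ℕ) : Type := Fin n ⊕ (Fin n ⊕ Fin d)

variable {n d : ℕ}

/-- `Q` is a convergent defining series, in normal coordinates, of a germ at `0` of a
real-analytic generic submanifold of codimension `d` in `ℂ^{n+d}`:  it is convergent,
satisfies the normality conditions `Q(0,χ,τ) = τ`, `Q(z,0,τ) = τ` and the reality condition
`Q(z,χ,Q̄(χ,z,τ)) = τ`. -/
structure IsDefSeries (Q : Fin d → MvPowerSeries (W3 n d) ℂ) : Prop where
  conv : ∀ c, IsConv (Q c)
  normal1 : ∀ c, dAt0 (Sum.inr : Fin n ⊕ Fin d → W3 n d) 0 (Q c)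
      = MvPowerSeries.X (Sum.inr c)
  normal2 : ∀ c, dAt0 (Sum.map (id : Fin n → Fin n) (Sum.inr : Fin d → Fin n ⊕ Fin d)) 0 (Q c)
      = MvPowerSeries.X (Sum.inr c)
  reality : ∀ c, substC (fun v : W3 n d => match v with
      | Sum.inl i => MvPowerSeries.X (Sum.inl i)
      | Sum.inr (Sum.inl i) => MvPowerSeries.X (Sum.inr (Sum.inl i))
      | Sum.inr (Sum.inr c') => substC (fun w : W3 n d => match w with
          | Sum.inl i => MvPowerSeries.X (Sum.inr (Sum.inl i))
          | Sum.inr (Sum.inl i) => MvPowerSeries.X (Sum.inl i)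
          | Sum.inr (Sum.inr c'') => MvPowerSeries.X (Sum.inr (Sum.inr c'')))
          (sconj (Q c'))) (Q c) = MvPowerSeries.X (Sum.inr (Sum.inr c))

/-- Composition `f(z, Q(z,χ,τ))`, a series in the variables `(z,χ,τ)`. -/
def compQ (Q : Fin d → MvPowerSeries (W3 n d) ℂ) (f : MvPowerSeries (Fin n ⊕ Fin d) ℂ) :
    MvPowerSeries (W3 n d) ℂ :=
  substC (fun w : Fin n ⊕ Fin d => match w with
    | Sum.inl i => MvPowerSeries.X (Sum.inl i)
    | Sum.inr c => Q c) f

/-- The components of `H̄(χ,τ)`, viewed as series in the variables `(z,χ,τ)`. -/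
def barSub (H : Fin n ⊕ Fin d → MvPowerSeries (Fin n ⊕ Fin d) ℂ) (v : Fin n ⊕ Fin d) :
    MvPowerSeries (W3 n d) ℂ :=
  inject (Sum.inr : Fin n ⊕ Fin d → W3 n d) (sconj (H v))

/-- `H` sends `M` into `M'`:  `Q'(F(z,Q(z,χ,τ)), H̄(χ,τ)) = G(z,Q(z,χ,τ))`. -/
def Sends (Q Q' : Fin d → MvPowerSeries (W3 n d) ℂ)
    (H : Fin n ⊕ Fin d → MvPowerSeries (Fin n ⊕ Fin d) ℂ) : Prop :=
  ∀ r, substC (fun v : W3 n d => match v with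
      | Sum.inl i => compQ Q (H (Sum.inl i))
      | Sum.inr v' => barSub H v') (Q' r)
    = compQ Q (H (Sum.inr r))

/-- The Taylor coefficient `Q_α(χ,τ)` of a series `Q(z,χ,τ)` with respect to `z^α`. -/
def coeffZ (α : Fin n →₀ ℕ) (f : MvPowerSeries (W3 n d) ℂ) :
    MvPowerSeries (Fin n ⊕ Fin d) ℂ :=
  fun γ => MvPowerSeries.coeff
    (Finsupp.mapDomain Sum.inl α + Finsupp.mapDomain Sum.inr γ) f

/-- Holomorphic nondegeneracy at `0`, via Stanton's criterion:  there are multi-indices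
`α^1,…,α^n` and components `r_1,…,r_n` such that `det (∂Q^{r_k}_{α^k}/∂χ_l) ≢ 0`. -/
def HolNondeg (Q : Fin d → MvPowerSeries (W3 n d) ℂ) : Prop :=
  ∃ (A : Fin n → (Fin n →₀ ℕ)) (rr : Fin n → Fin d),
    (Matrix.of fun k l : Fin n => pd (Sum.inl l) (coeffZ (A k) (Q (rr k)))).det ≠ 0

/-- The reflection function `R(z',χ,τ) = Q'(z', H̄(χ,τ))` (components);  the ambient
variables `W3 n d` are read as `(z', (χ, τ))`. -/
def Refl (Q' : Fin d → MvPowerSeries (W3 n d) ℂ)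
    (H : Fin n ⊕ Fin d → MvPowerSeries (Fin n ⊕ Fin d) ℂ) (r : Fin d) :
    MvPowerSeries (W3 n d) ℂ :=
  substC (fun v : W3 n d => match v with
    | Sum.inl i => MvPowerSeries.X (Sum.inl i)
    | Sum.inr v' => barSub H v') (Q' r)

/-- Variables `(z^1, χ^1, z^2, χ^2, …)` (j blocks of size n, block `2k` is `z^{k+1}` and
block `2k+1` is `χ^{k+1}`) together with `t ∈ ℂ^d`. -/
abbrev SVar (n d j : ℕ) : Type := (Fin j × Fin n) ⊕ Fin d

/-- The Segre set mappings `U_j`. -/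
def Useg (Q : Fin d → MvPowerSeries (W3 n d) ℂ) :
    (j : ℕ) → Fin d → MvPowerSeries (SVar n d j) ℂ
  | 0 => fun c => MvPowerSeries.X (Sum.inr c)
  | 1 => fun c => MvPowerSeries.X (Sum.inr c)
  | m + 2 => fun c =>
      substC (fun v : SVar n d (m + 1) => match v with
        | Sum.inl (k, a) => MvPowerSeries.X (Sum.inl (Fin.castSucc k, a))
        | Sum.inr c' => substC (fun w : W3 n d => match w with
            | Sum.inl a => MvPowerSeries.X (Sum.inl (⟨m, by omega⟩, a))
            | Sum.inr (Sum.inl a) => MvPowerSeries.X (Sum.inl (⟨m + 1, by omega⟩, a))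
            | Sum.inr (Sum.inr c'') => MvPowerSeries.X (Sum.inr c''))
            (if (m + 2) % 2 = 0 then Q c' else sconj (Q c')))
        (Useg Q (m + 1) c)

/-- The Segre set mappings `V_j = (z^1, U_j)`. -/
def Vseg (Q : Fin d → MvPowerSeries (W3 n d) ℂ) (j : ℕ) :
    Fin n ⊕ Fin d → MvPowerSeries (SVar n d j) ℂ :=
  fun c => match c with
  | Sum.inl i => if h : 0 < j then MvPowerSeries.X (Sum.inl (⟨0, h⟩, i)) else 0
  | Sum.inr c' => Useg Q j c'

/-- Minimality of `M` at `0`, expressed through the Segre mapping of order `2(d+1)`: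
there is a sequence of points `p_k → 0` at which `V_{2(d+1)}(p_k;0) = 0` and the Jacobian
matrix of `p ↦ V_{2(d+1)}(p;0)` has rank `n+d`. -/
def Minimal (Q : Fin d → MvPowerSeries (W3 n d) ℂ) : Prop :=
  ∃ p : ℕ → ((Fin (2 * (d + 1)) × Fin n) → ℂ),
    Filter.Tendsto p Filter.atTop (nhds 0) ∧
    ∀ k, (∀ c, evalAt (Vseg Q (2 * (d + 1)) c) (Sum.elim (p k) 0) = 0) ∧
      (Matrix.of fun (c : Fin n ⊕ Fin d) (v : Fin (2 * (d + 1)) × Fin n) =>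
        evalAt (pd (Sum.inl v) (Vseg Q (2 * (d + 1)) c)) (Sum.elim (p k) 0)).rank = n + d

/-- Minimality at `0` for a hypersurface in normal coordinates: `Q(z,χ,0) ≢ 0`. -/
def MinimalHyp (Q : Fin 1 → MvPowerSeries (W3 n 1) ℂ) : Prop :=
  dAt0 (Sum.map (id : Fin n → Fin n) (Sum.inl : Fin n → Fin n ⊕ Fin 1)) 0 (Q 0) ≠ 0

/-- `M'` contains no (nonconstant) formal holomorphic curve through `0`:  the only formal
curve `γ = (c, g)` with `γ(0) = 0` and `g(t) = Q'(c(t), c̄(s), ḡ(s))` is the constant one. -/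
def NoFormalCurve (Q' : Fin 1 → MvPowerSeries (W3 n 1) ℂ) : Prop :=
  ∀ (c : Fin n → MvPowerSeries Unit ℂ) (g : MvPowerSeries Unit ℂ),
    (∀ i, MvPowerSeries.constantCoeff (c i) = 0) →
    MvPowerSeries.constantCoeff g = 0 →
    inject (Sum.inl : Unit → Unit ⊕ Unit) g =
      substC (fun v : W3 n 1 => match v with
        | Sum.inl i => inject (Sum.inl : Unit → Unit ⊕ Unit) (c i)
        | Sum.inr (Sum.inl i) => inject (Sum.inr : Unit → Unit ⊕ Unit) (sconj (c i))
        | Sum.inr (Sum.inr _) => inject (Sum.inr : Unit → Unit ⊕ Unit) (sconj g)) (Q' 0) →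
    (∀ i, c i = 0) ∧ g = 0

/-- The determinant `det ∂_z(F(z,Q(z,χ,τ)))`, a series in `(z,χ,τ)`. -/
def Dser (Q : Fin d → MvPowerSeries (W3 n d) ℂ)
    (H : Fin n ⊕ Fin d → MvPowerSeries (Fin n ⊕ Fin d) ℂ) : MvPowerSeries (W3 n d) ℂ :=
  (Matrix.of fun i l : Fin n => pd (Sum.inl l) (compQ Q (H (Sum.inl i)))).det

/-- `∂^η_z ∂^δ_τ|_{(z,τ)=(0,0)}`, a series in `χ`. -/
def dZT0 (η : Fin n →₀ ℕ) (δ : Fin d →₀ ℕ) (f : MvPowerSeries (W3 n d) ℂ) :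
    MvPowerSeries (Fin n) ℂ :=
  dAt0 (fun i : Fin n => Sum.inr (Sum.inl i))
    (Finsupp.mapDomain Sum.inl η + Finsupp.mapDomain (fun c => Sum.inr (Sum.inr c)) δ) f

/-- `∂^β_τ|_{τ=0}` of a series in `(χ,τ)`, a series in `χ`. -/
def dTau0 (β : Fin d →₀ ℕ) (f : MvPowerSeries (Fin n ⊕ Fin d) ℂ) : MvPowerSeries (Fin n) ℂ :=
  dAt0 (Sum.inl : Fin n → Fin n ⊕ Fin d) (Finsupp.mapDomain Sum.inr β) f

/-- `Q'_α(H̄(χ,τ))` (r-th component), a series in `(χ,τ)`. -/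
def QpaH (Q' : Fin d → MvPowerSeries (W3 n d) ℂ)
    (H : Fin n ⊕ Fin d → MvPowerSeries (Fin n ⊕ Fin d) ℂ) (α : Fin n →₀ ℕ) (r : Fin d) :
    MvPowerSeries (Fin n ⊕ Fin d) ℂ :=
  substC (fun v => sconj (H v)) (coeffZ α (Q' r))

/-- `F(V_j(z^1,χ^2,z^2,…;0))`, embedded as a series on the blocks `1,…,j` of
`(χ^1,z^1,χ^2,z^2,…)` (j+1 blocks), with `t = 0`. -/
def FVsetZ (Q : Fin d → MvPowerSeries (W3 n d) ℂ)
    (H : Fin n ⊕ Fin d → MvPowerSeries (Fin n ⊕ Fin d) ℂ) (j : ℕ) (i : Fin n) :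
    MvPowerSeries (SVar n d (j + 1)) ℂ :=
  substC (fun v : SVar n d j => match v with
    | Sum.inl (k, a) => MvPowerSeries.X (Sum.inl (Fin.succ k, a))
    | Sum.inr _ => 0)
    (substC (Vseg Q j) (H (Sum.inl i)))

/-- `H̄(V̄_{j+1}(χ^1,z^1,χ^2,z^2,…;t))` (components). -/
def HbarV (Q : Fin d → MvPowerSeries (W3 n d) ℂ)
    (H : Fin n ⊕ Fin d → MvPowerSeries (Fin n ⊕ Fin d) ℂ) (j : ℕ) (v : Fin n ⊕ Fin d) :
    MvPowerSeries (SVar n d (j + 1)) ℂ :=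
  substC (fun w : Fin n ⊕ Fin d => sconj (Vseg Q (j + 1) w)) (sconj (H v))

/-- `(∂^α_{z'} Q'^r)(F(V_j(z^1,χ^2,…;0)), H̄(V̄_{j+1}(χ^1,z^1,χ^2,…;t)))`. -/
def Eexpr (Q Q' : Fin d → MvPowerSeries (W3 n d) ℂ)
    (H : Fin n ⊕ Fin d → MvPowerSeries (Fin n ⊕ Fin d) ℂ) (j : ℕ)
    (α : Fin n →₀ ℕ) (r : Fin d) : MvPowerSeries (SVar n d (j + 1)) ℂ :=
  substC (fun v : W3 n d => match v with
    | Sum.inl i => FVsetZ Q H j i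
    | Sum.inr v' => HbarV Q H j v')
    (dpow (Finsupp.mapDomain Sum.inl α) (Q' r))

/-- The substitution `z ↦ z^1`, `χ ↦ χ^1`, `τ ↦ Ū_{j+1}(χ^1,z^1,χ^2,…;t)`, where the blocks
of `SVar n d (j+1)` are read as `(χ^1, z^1, χ^2, z^2, …)`. -/
def tauSubst (Q : Fin d → MvPowerSeries (W3 n d) ℂ) (j : ℕ) (hj : 1 ≤ j) :
    W3 n d → MvPowerSeries (SVar n d (j + 1)) ℂ :=
  fun v => match v with
  | Sum.inl i => MvPowerSeries.X (Sum.inl (⟨1, by omega⟩, i))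
  | Sum.inr (Sum.inl i) => MvPowerSeries.X (Sum.inl (⟨0, by omega⟩, i))
  | Sum.inr (Sum.inr c) => sconj (Useg Q (j + 1) c)

/-- `Φ_j = det(∂_{z^1}(F(z^1,Q(z^1,χ^1,τ))))|_{τ = Ū_{j+1}(χ^1,z^1,χ^2,…;t)}`. -/
def PhiJ (Q : Fin d → MvPowerSeries (W3 n d) ℂ)
    (H : Fin n ⊕ Fin d → MvPowerSeries (Fin n ⊕ Fin d) ℂ) (j : ℕ) (hj : 1 ≤ j) :
    MvPowerSeries (SVar n d (j + 1)) ℂ :=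
  substC (tauSubst Q j hj) (Dser Q H)

/-- `(∂^η_{z^1} H^{(r)}(z^1,Q(z^1,χ^1,τ)))|_{τ = Ū_{j+1}(χ^1,z^1,χ^2,…;t)}` (component `c`
of `H^{(r)} = (F, G^r)`). -/
def PsiJ (Q : Fin d → MvPowerSeries (W3 n d) ℂ)
    (H : Fin n ⊕ Fin d → MvPowerSeries (Fin n ⊕ Fin d) ℂ) (j : ℕ) (hj : 1 ≤ j)
    (c : Fin n ⊕ Unit) (r : Fin d) (η : Fin n →₀ ℕ) :
    MvPowerSeries (SVar n d (j + 1)) ℂ :=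
  substC (tauSubst Q j hj)
    (dpow (Finsupp.mapDomain Sum.inl η)
      (compQ Q (H (Sum.elim Sum.inl (fun _ => Sum.inr r) c))))


end Paper

/-!
Differentiate the mapping equation `Q'(F(z,Q), H̄(χ,τ)) = G(z,Q)` in `z`: since `H̄(χ,τ)` does
not depend on `z`, each `∂_z (G^r(z,Q))` is the combination `∑ᵢ (∂Q'^r/∂z'ᵢ) ∂_z (Fᵢ(z,Q))`.
So in the Jacobian matrix of `H(z, Q(z,χ,τ))` with respect to `(z,τ)` the lower-left block is a
left multiple of the upper-left block `∂_z (F(z,Q))`, and the whole determinant is a multiple of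
`det ∂_z (F(z,Q))`. By the chain rule that determinant is also `(Jac H)(z,Q) · det ∂Q/∂τ`. The first
factor is nonzero because `(z, Q(z,0,τ)) = (z,τ)`, so setting `χ = 0` recovers `Jac H`; the second
has constant term `1` because `Q(0,χ,τ) = τ`.
-/

namespace MvPowerSeries

variable {σ τ υ R : Type*} [CommRing R]

theorem degree_le_of_coeff_prod_pow_ne_zero [Fintype σ] {a : σ → MvPowerSeries τ R}
    (ha : ∀ s, constantCoeff (a s) = 0) {α : σ →₀ ℕ} {γ : τ →₀ ℕ}
    (h : coeff γ (∏ s, a s ^ α s) ≠ 0) : α.degree ≤ γ.degree := by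
  contrapose! h
  refine coeff_of_lt_order (lt_of_lt_of_le (Nat.cast_lt.mpr h) (.trans ?_ (le_order_prod _ _)))
  rw [Finsupp.degree_eq_sum]
  exact_mod_cast Finset.sum_le_sum fun s _ => le_order_pow_of_constantCoeff_eq_zero _ (ha s)

section truncTotal

variable [Finite σ] {k : ℕ} {f g : MvPowerSeries σ R}

theorem truncTotal_eq_truncTotal_iff :
    truncTotal k f = truncTotal k g ↔ ∀ x : σ →₀ ℕ, x.degree < k → coeff x f = coeff x g := by
  refine ⟨fun h x hx => by rw [← coeff_truncTotal f hx, ← coeff_truncTotal g hx, h], fun h => ?_⟩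
  ext x
  simp only [coeff_truncTotal_eq_ite]
  split_ifs with hx
  exacts [h x hx, rfl]

theorem ext_truncTotal (h : ∀ k, truncTotal k f = truncTotal k g) : f = g := by
  ext x
  exact truncTotal_eq_truncTotal_iff.1 (h (x.degree + 1)) x (Nat.lt_succ_self _)

theorem truncTotal_eq_of_le {m : ℕ} (hkm : k ≤ m) (h : truncTotal m f = truncTotal m g) :
    truncTotal k f = truncTotal k g :=
  truncTotal_eq_truncTotal_iff.2 fun x hx =>
    truncTotal_eq_truncTotal_iff.1 h x (hx.trans_le hkm)

theorem truncTotal_truncTotal (f : MvPowerSeries σ R) :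
    truncTotal k (truncTotal k f : MvPowerSeries σ R) = truncTotal k f := by
  ext x
  simp only [coeff_truncTotal_eq_ite, MvPolynomial.coeff_coe]
  split_ifs <;> rfl

theorem truncTotal_mul_eq {f' g' : MvPowerSeries σ R} (h : truncTotal k f = truncTotal k g)
    (h' : truncTotal k f' = truncTotal k g') : truncTotal k (f * f') = truncTotal k (g * g') :=
  truncTotal_eq_truncTotal_iff.2 fun x hx => by
    rw [← coeff_truncTotal_mul_truncTotal_eq_coeff_mul _ _ hx, h, h',
      coeff_truncTotal_mul_truncTotal_eq_coeff_mul _ _ hx]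

theorem truncTotal_pderiv_eq (v : σ) (h : truncTotal (k + 1) f = truncTotal (k + 1) g) :
    truncTotal k (pderiv R v f) = truncTotal k (pderiv R v g) :=
  truncTotal_eq_truncTotal_iff.2 fun x hx => by
    rw [coeff_pderiv, coeff_pderiv, truncTotal_eq_truncTotal_iff.1 h]
    rw [map_add, Finsupp.degree_single]
    omega

theorem truncTotal_subst_eq [Finite τ] {a : σ → MvPowerSeries τ R}
    (ha : ∀ s, constantCoeff (a s) = 0) (h : truncTotal k f = truncTotal k g) :
    truncTotal k (subst a f) = truncTotal k (subst a g) := by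
  rw [truncTotal_subst_eq_truncTotal_truncTotal_subst ha, h,
    ← truncTotal_subst_eq_truncTotal_truncTotal_subst ha]

theorem truncTotal_killCompl_eq [Finite τ] (e : τ ↪ σ) (h : truncTotal k f = truncTotal k g) :
    truncTotal k (killCompl e f) = truncTotal k (killCompl e g) :=
  truncTotal_eq_truncTotal_iff.2 fun x hx => by
    rw [coeff_killCompl, coeff_killCompl, truncTotal_eq_truncTotal_iff.1 h]
    rwa [Finsupp.embDomain_eq_mapDomain, Finsupp.degree_mapDomain]

end truncTotal

-- Identities between substitutions and derivatives are reduced through this to polynomials.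
theorem eq_of_forall_coe_eq [Finite σ] [Finite τ]
    {Φ Ψ : MvPowerSeries σ R → MvPowerSeries τ R}
    (hΦ : ∀ k f g, truncTotal (k + 1) f = truncTotal (k + 1) g →
      truncTotal k (Φ f) = truncTotal k (Φ g))
    (hΨ : ∀ k f g, truncTotal (k + 1) f = truncTotal (k + 1) g →
      truncTotal k (Ψ f) = truncTotal k (Ψ g))
    (h : ∀ p : MvPolynomial σ R, Φ p = Ψ p) (f : MvPowerSeries σ R) : Φ f = Ψ f :=
  ext_truncTotal fun k => by
    have htrunc := (truncTotal_truncTotal (k := k + 1) f).symm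
    rw [hΦ k _ _ htrunc, hΨ k _ _ htrunc, h]

section ChainRule

variable [Fintype σ] {a : σ → MvPowerSeries τ R}

theorem pderiv_subst_coe (ha : ∀ s, constantCoeff (a s) = 0) (v : τ) (p : MvPolynomial σ R) :
    pderiv R v (subst a (p : MvPowerSeries σ R)) =
      ∑ s, subst a (pderiv R s (p : MvPowerSeries σ R)) * pderiv R v (a s) := by
  classical
  have ha' : HasSubst a := hasSubst_of_constantCoeff_zero ha
  rw [← coe_substAlgHom ha']
  induction p using MvPolynomial.induction_on with
  | C c =>
    rw [MvPolynomial.coe_C, c_eq_algebraMap, AlgHom.commutes]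
    simp only [← c_eq_algebraMap, pderiv_C, map_zero, zero_mul,
      Finset.sum_const_zero]
  | add p q hp hq =>
    simp only [MvPolynomial.coe_add, map_add, hp, hq, add_mul, Finset.sum_add_distrib]
  | mul_X p t hp =>
    simp only [MvPolynomial.coe_mul, MvPolynomial.coe_X, map_mul, map_add, Derivation.leibniz,
      pderiv_X, smul_eq_mul, substAlgHom_X, hp, add_mul, Finset.sum_add_distrib]
    simp only [Pi.single_apply, apply_ite (substAlgHom ha'), map_one, map_zero, mul_ite, mul_one,
      mul_zero, ite_mul, zero_mul, Finset.sum_ite_eq, Finset.mem_univ, if_true, Finset.mul_sum,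
      mul_assoc]

theorem pderiv_subst [Finite τ] (ha : ∀ s, constantCoeff (a s) = 0) (v : τ)
    (f : MvPowerSeries σ R) :
    pderiv R v (subst a f) = ∑ s, subst a (pderiv R s f) * pderiv R v (a s) := by
  refine eq_of_forall_coe_eq (Φ := fun f => pderiv R v (subst a f))
    (Ψ := fun f => ∑ s, subst a (pderiv R s f) * pderiv R v (a s))
    (fun k f g h => ?_) (fun k f g h => ?_) (pderiv_subst_coe ha v) f
  · exact truncTotal_pderiv_eq v (truncTotal_subst_eq ha h)
  · simp only [map_sum]
    refine Finset.sum_congr rfl fun s _ => ?_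
    exact truncTotal_mul_eq (truncTotal_subst_eq ha (truncTotal_pderiv_eq s h)) rfl

end ChainRule

theorem killCompl_subst [Finite σ] [Finite τ] [Finite υ] (e : υ ↪ τ)
    {a : σ → MvPowerSeries τ R} (ha : ∀ s, constantCoeff (a s) = 0) (f : MvPowerSeries σ R) :
    killCompl e (subst a f) = subst (fun s => killCompl e (a s)) f := by
  have hka : ∀ s, constantCoeff (killCompl e (a s)) = 0 := fun s => by
    rw [← coeff_zero_eq_constantCoeff_apply, coeff_killCompl, Finsupp.embDomain_zero,
      coeff_zero_eq_constantCoeff_apply, ha]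
  refine eq_of_forall_coe_eq (Φ := fun f => killCompl e (subst a f))
    (Ψ := subst fun s => killCompl e (a s)) (fun k f g h => ?_) (fun k f g h => ?_) (fun p => ?_) f
  · exact truncTotal_killCompl_eq e (truncTotal_subst_eq ha (truncTotal_eq_of_le k.le_succ h))
  · exact truncTotal_subst_eq hka (truncTotal_eq_of_le k.le_succ h)
  · rw [subst_coe, subst_coe, ← AlgHom.comp_apply, MvPolynomial.comp_aeval]

end MvPowerSeries

namespace Matrix

variable {m o R : Type*} [Fintype m] [DecidableEq m] [Fintype o] [DecidableEq o] [CommRing R]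

theorem det_fromBlocks_mul₂₁ (P : Matrix m m R) (B : Matrix m o R) (L : Matrix o m R)
    (T : Matrix o o R) : (fromBlocks P B (L * P) T).det = P.det * (T - L * B).det := by
  have : fromBlocks P B (L * P) T = fromBlocks 1 0 L 1 * fromBlocks P B 0 (T - L * B) := by
    simp [fromBlocks_multiply]
  rw [this, det_mul, det_fromBlocks_zero₁₂, det_fromBlocks_zero₂₁, det_one, det_one, one_mul,
    one_mul]

end Matrix

namespace Paper

variable {σ τ : Type*}

theorem pd_eq_pderiv (v : σ) (f : MvPowerSeries σ ℂ) : pd v f = pderiv ℂ v f := by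
  ext γ
  show (((Finsupp.single v 1).prod fun i k => (γ i + k).choose k * k.factorial : ℕ) : ℂ) * _ = _
  rw [coeff_pderiv, Finsupp.prod_single_index (by simp)]
  push_cast [Nat.choose_one_right, Nat.factorial_one]
  ring

theorem coeff_dAt0_zero (e : σ → τ) (f : MvPowerSeries τ ℂ) (γ : σ →₀ ℕ) :
    coeff γ (dAt0 e 0 f) = coeff (Finsupp.mapDomain e γ) f := by
  show (((Finsupp.prod 0 _ : ℕ) : ℂ)) * _ = _
  rw [Finsupp.prod_zero_index, Nat.cast_one, one_mul, add_zero]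

theorem substC_eq_subst [Fintype σ] [DecidableEq σ] {a : σ → MvPowerSeries τ ℂ}
    (ha : ∀ s, constantCoeff (a s) = 0) (f : MvPowerSeries σ ℂ) : substC a f = subst a f := by
  ext γ
  rw [coeff_subst (hasSubst_of_constantCoeff_zero ha)]
  refine ((finsum_eq_sum_of_support_subset _ fun α hα => ?_).trans
    (Finset.sum_congr rfl fun α _ => ?_)).symm
  · rw [Function.mem_support, Finsupp.prod_fintype _ _ fun _ => pow_zero _] at hα
    have hdeg := degree_le_of_coeff_prod_pow_ne_zero ha (right_ne_zero_of_smul hα)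
    simp only [Finset.coe_Iic, Set.mem_Iic, Finsupp.le_def, Finsupp.equivFunOnFinite_symm_apply_apply]
    exact fun s => (Finsupp.le_degree s α).trans hdeg
  · rw [Finsupp.prod_fintype _ _ fun _ => pow_zero _, smul_eq_mul]

variable {n d : ℕ}

/-- The map `(z, τ) ↦ (z, Q(z,χ,τ))`, whose substitution is `compQ Q`. -/
def zQ (Q : Fin d → MvPowerSeries (W3 n d) ℂ) : Fin n ⊕ Fin d → MvPowerSeries (W3 n d) ℂ :=
  Sum.elim (fun i => X (Sum.inl i)) Q

def zTau (n d : ℕ) : Fin n ⊕ Fin d ↪ W3 n d :=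
  ⟨Sum.map id Sum.inr, Sum.map_injective.2 ⟨Function.injective_id, Sum.inr_injective⟩⟩

/-- The substitution `z' ↦ F(z, Q(z,χ,τ))`, `(χ', τ') ↦ H̄(χ,τ)` of the mapping equation. -/
def reflSubst (Q : Fin d → MvPowerSeries (W3 n d) ℂ)
    (H : Fin n ⊕ Fin d → MvPowerSeries (Fin n ⊕ Fin d) ℂ) : W3 n d → MvPowerSeries (W3 n d) ℂ :=
  Sum.elim (fun i => compQ Q (H (Sum.inl i))) (barSub H)

theorem compQ_eq_substC (Q : Fin d → MvPowerSeries (W3 n d) ℂ)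
    (f : MvPowerSeries (Fin n ⊕ Fin d) ℂ) : compQ Q f = substC (zQ Q) f := by
  unfold compQ
  congr 1
  funext w
  cases w <;> rfl

theorem Sends.substC_reflSubst {Q Q' : Fin d → MvPowerSeries (W3 n d) ℂ}
    {H : Fin n ⊕ Fin d → MvPowerSeries (Fin n ⊕ Fin d) ℂ} (hsend : Sends Q Q' H) (r : Fin d) :
    substC (reflSubst Q H) (Q' r) = compQ Q (H (Sum.inr r)) := by
  rw [← hsend r]
  congr 1
  funext v
  cases v <;> rfl

theorem barSub_eq_rename (H : Fin n ⊕ Fin d → MvPowerSeries (Fin n ⊕ Fin d) ℂ)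
    (v : Fin n ⊕ Fin d) : barSub H v = rename (Sum.inr : _ → W3 n d) (sconj (H v)) := by
  rw [rename_eq_subst, barSub, inject, substC_eq_subst fun _ => constantCoeff_X _]
  rfl

theorem constantCoeff_barSub (H : Fin n ⊕ Fin d → MvPowerSeries (Fin n ⊕ Fin d) ℂ)
    (v : Fin n ⊕ Fin d) : constantCoeff (barSub H v) = starRingEnd ℂ (constantCoeff (H v)) := by
  rw [barSub_eq_rename, constantCoeff_rename]
  rfl

theorem pderiv_inl_barSub (H : Fin n ⊕ Fin d → MvPowerSeries (Fin n ⊕ Fin d) ℂ)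
    (v : Fin n ⊕ Fin d) (j : Fin n) : pderiv ℂ (Sum.inl j : W3 n d) (barSub H v) = 0 := by
  rw [barSub_eq_rename, rename_eq_subst, pderiv_subst (a := X ∘ Sum.inr) fun _ => constantCoeff_X _]
  simp

/-- The Jacobian matrix `∂(H(z, Q(z,χ,τ))) / ∂(z, τ)`. -/
def jacZTau (Q : Fin d → MvPowerSeries (W3 n d) ℂ)
    (H : Fin n ⊕ Fin d → MvPowerSeries (Fin n ⊕ Fin d) ℂ) :
    Matrix (Fin n ⊕ Fin d) (Fin n ⊕ Fin d) (MvPowerSeries (W3 n d) ℂ) :=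
  Matrix.of fun k e => pderiv ℂ (zTau n d e) (compQ Q (H k))

theorem Dser_eq_det_toBlocks₁₁ (Q : Fin d → MvPowerSeries (W3 n d) ℂ)
    (H : Fin n ⊕ Fin d → MvPowerSeries (Fin n ⊕ Fin d) ℂ) :
    Dser Q H = (jacZTau Q H).toBlocks₁₁.det := by
  simp only [Dser, pd_eq_pderiv]
  rfl

section DefSeries

variable {Q : Fin d → MvPowerSeries (W3 n d) ℂ} (hQ : IsDefSeries Q)
include hQ

theorem IsDefSeries.coeff_mapDomain_inr (c : Fin d) (γ : Fin n ⊕ Fin d →₀ ℕ) :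
    coeff (Finsupp.mapDomain Sum.inr γ) (Q c) = coeff γ (X (Sum.inr c)) := by
  rw [← coeff_dAt0_zero, hQ.normal1]

theorem IsDefSeries.constantCoeff_eq_zero (c : Fin d) : constantCoeff (Q c) = 0 := by
  simpa using hQ.coeff_mapDomain_inr c 0

theorem IsDefSeries.constantCoeff_zQ (w : Fin n ⊕ Fin d) : constantCoeff (zQ Q w) = 0 := by
  cases w
  exacts [constantCoeff_X _, hQ.constantCoeff_eq_zero _]

theorem IsDefSeries.compQ_eq_subst (f : MvPowerSeries (Fin n ⊕ Fin d) ℂ) :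
    compQ Q f = subst (zQ Q) f := by
  rw [compQ_eq_substC, substC_eq_subst hQ.constantCoeff_zQ]

theorem IsDefSeries.killCompl_zTau (c : Fin d) : killCompl (zTau n d) (Q c) = X (Sum.inr c) := by
  ext γ
  rw [coeff_killCompl, Finsupp.embDomain_eq_mapDomain]
  exact (coeff_dAt0_zero (Sum.map id Sum.inr) _ γ).symm.trans (by rw [hQ.normal2])

theorem IsDefSeries.killCompl_compQ (f : MvPowerSeries (Fin n ⊕ Fin d) ℂ) :
    killCompl (zTau n d) (compQ Q f) = f := by
  have hX : (fun w => killCompl (zTau n d) (zQ Q w)) = X := by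
    funext w
    cases w with
    | inl i => exact killCompl_X (e := zTau n d) (Sum.inl i)
    | inr c => exact hQ.killCompl_zTau c
  rw [hQ.compQ_eq_subst, killCompl_subst _ hQ.constantCoeff_zQ, hX, subst_self, id]

theorem IsDefSeries.constantCoeff_det_pderiv_tau :
    constantCoeff (Matrix.of fun c c' : Fin d =>
      pderiv ℂ (Sum.inr (Sum.inr c') : W3 n d) (Q c)).det = 1 := by
  rw [RingHom.map_det, ← Matrix.det_one (n := Fin d) (R := ℂ)]
  congr 1
  ext c c'
  rw [RingHom.mapMatrix_apply, Matrix.map_apply, Matrix.of_apply, ← coeff_zero_eq_constantCoeff_apply,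
    coeff_pderiv, zero_add, ← Finsupp.mapDomain_single, hQ.coeff_mapDomain_inr, coeff_X,
    Matrix.one_apply]
  simp [Finsupp.single_left_inj, eq_comm]

theorem IsDefSeries.det_jacZTau (H : Fin n ⊕ Fin d → MvPowerSeries (Fin n ⊕ Fin d) ℂ) :
    (jacZTau Q H).det = compQ Q (jacDet H) *
      (Matrix.of fun c c' : Fin d => pderiv ℂ (Sum.inr (Sum.inr c') : W3 n d) (Q c)).det := by
  let φ := (substAlgHom (R := ℂ) (hasSubst_of_constantCoeff_zero hQ.constantCoeff_zQ)).toRingHom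
  have hchain : jacZTau Q H = φ.mapMatrix (Matrix.of fun k w => pderiv ℂ w (H k)) *
      Matrix.of fun w e => pderiv ℂ (zTau n d e) (zQ Q w) := by
    ext k e
    simp [φ, Matrix.mul_apply, jacZTau, hQ.compQ_eq_subst, pderiv_subst hQ.constantCoeff_zQ]
  have hblocks : (Matrix.of fun w e => pderiv ℂ (zTau n d e) (zQ Q w)) = Matrix.fromBlocks 1 0
      (Matrix.of fun c l => pderiv ℂ (Sum.inl l) (Q c))
      (Matrix.of fun c c' => pderiv ℂ (Sum.inr (Sum.inr c')) (Q c)) := by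
    ext (i | c) (l | c') <;> simp [zQ, zTau, pderiv_X, Pi.single_apply, Matrix.one_apply]
  rw [hchain, Matrix.det_mul, ← RingHom.map_det, hblocks, Matrix.det_fromBlocks_zero₁₂,
    Matrix.det_one, one_mul, hQ.compQ_eq_subst, jacDet]
  simp [φ, pd_eq_pderiv]

theorem Sends.toBlocks₂₁_jacZTau {Q' : Fin d → MvPowerSeries (W3 n d) ℂ}
    {H : Fin n ⊕ Fin d → MvPowerSeries (Fin n ⊕ Fin d) ℂ}
    (hH0 : ∀ v, constantCoeff (H v) = 0) (hsend : Sends Q Q' H) :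
    (jacZTau Q H).toBlocks₂₁ = Matrix.of (fun r i => subst (reflSubst Q H)
      (pderiv ℂ (Sum.inl i : W3 n d) (Q' r))) * (jacZTau Q H).toBlocks₁₁ := by
  have hθ : ∀ v, constantCoeff (reflSubst Q H v) = 0 := by
    rintro (i | v)
    · rw [reflSubst, Sum.elim_inl, hQ.compQ_eq_subst]
      exact constantCoeff_subst_eq_zero (hasSubst_of_constantCoeff_zero hQ.constantCoeff_zQ)
        hQ.constantCoeff_zQ (hH0 _)
    · rw [reflSubst, Sum.elim_inr, constantCoeff_barSub, hH0, map_zero]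
  ext r j
  rw [Matrix.toBlocks₂₁, Matrix.of_apply, jacZTau, Matrix.of_apply, ← hsend.substC_reflSubst r,
    substC_eq_subst hθ, pderiv_subst hθ, Fintype.sum_sum_type]
  simp [reflSubst, pderiv_inl_barSub, Matrix.mul_apply, Matrix.toBlocks₁₁, zTau]

end DefSeries

theorem stmt_5_general (n d : ℕ)
    (Q Q' : Fin d → MvPowerSeries (W3 n d) ℂ)
    (hQ : IsDefSeries Q)
    (H : Fin n ⊕ Fin d → MvPowerSeries (Fin n ⊕ Fin d) ℂ)
    (hH0 : ∀ c, MvPowerSeries.constantCoeff (H c) = 0)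
    (hsend : Sends Q Q' H) (hjac : jacDet H ≠ 0) :
    Dser Q H ≠ 0 := by
  intro hD
  have hdet : (jacZTau Q H).det = 0 := by
    rw [← Matrix.fromBlocks_toBlocks (jacZTau Q H), hsend.toBlocks₂₁_jacZTau hQ hH0,
      Matrix.det_fromBlocks_mul₂₁, ← Dser_eq_det_toBlocks₁₁, hD, zero_mul]
  have hcomp : compQ Q (jacDet H) ≠ 0 := fun h =>
    hjac (by rw [← hQ.killCompl_compQ (jacDet H), h, map_zero])
  have htau : (Matrix.of fun c c' : Fin d =>
      pderiv ℂ (Sum.inr (Sum.inr c') : W3 n d) (Q c)).det ≠ 0 := fun h =>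
    one_ne_zero (by rw [← hQ.constantCoeff_det_pderiv_tau, h, map_zero])
  exact mul_ne_zero hcomp htau (hQ.det_jacZTau H ▸ hdet)

theorem stmt_5 (n d : ℕ) (hn : 1 ≤ n) (hd : 1 ≤ d)
    (Q Q' : Fin d → MvPowerSeries (W3 n d) ℂ)
    (hQ : IsDefSeries Q) (hQ' : IsDefSeries Q')
    (H : Fin n ⊕ Fin d → MvPowerSeries (Fin n ⊕ Fin d) ℂ)
    (hH0 : ∀ c, MvPowerSeries.constantCoeff (H c) = 0)
    (hsend : Sends Q Q' H) (hjac : jacDet H ≠ 0) :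
    Dser Q H ≠ 0 :=
  stmt_5_general n d Q Q' hQ H hH0 hsend hjac

end Paper
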